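/- Tight instance for single-category chores (value computation): fix n ≥ 1, let M = {g_1, ..., g_{2n}} with common valuation v(g_j) = −1/(2n) if j < n, v(g_j) = −1/2 if n ≤ j ≤ n+1, and v(g_j) = 1/(2n) − 1 otherwise. Define P_k = {g_k, g_{2n+1−k}} for k ∈ {1, ..., n}. Then (P_k) is a partition of M into n bundles of size 2, v(P_k) = −1 for every k, and v(M) = −n. Moreover under quotas q⁻ = 1, q⁺ = n+1, the maximin share over n agents equals −1. -/

import Mathlib

open Finset

/-- Item values of the tight chores instance (items 1-indexed `1, …, 2n`):
`v j = −1/(2n)` if `j < n`, `v j = −1/2` if `n ≤ j ≤ n+1`, `v j = 1/(2n) − 1` otherwise. -/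
noncomputable def tightChoresVal (n : ℕ) (j : ℕ) : ℝ :=
  if j < n then -(1 / (2 * n : ℝ))
  else if j ≤ n + 1 then -(1 / 2)
  else 1 / (2 * n : ℝ) - 1

/-- Bundles of the tight chores instance: `P_k = {k, 2n+1−k}` for `k ∈ {1, …, n}`. -/
def tightChoresBundle (n : ℕ) (k : ℕ) : Finset ℕ :=
  {k, 2 * n + 1 - k}

/-- A quota-feasible partition of the items `{1, …, 2n}` into `n` bundles of sizes in
`[1, n+1]`. -/
def IsFeasibleChoresPartition (n : ℕ) (P : Fin n → Finset ℕ) : Prop :=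
  (∀ i j, i ≠ j → Disjoint (P i) (P j)) ∧
  Finset.univ.biUnion P = Finset.Icc 1 (2 * n) ∧
  ∀ k, 1 ≤ (P k).card ∧ (P k).card ≤ n + 1

/-!
Bundle `P_k` pairs the `k`-th lightest chore with the `k`-th heaviest one, which makes every
bundle worth exactly `−1` and the whole instance worth `−n`. In any feasible partition into `n`
bundles the bundle values add up to `−n`, so the worst bundle is worth at most the average `−1`;
the partition `(P_k)` attains this bound.
-/

theorem Finset.inf'_le_of_sum_le_card_nsmul {ι M : Type*} [AddCommMonoid M] [LinearOrder M]
    [IsOrderedCancelAddMonoid M] {s : Finset ι} (hs : s.Nonempty) {f : ι → M} {c : M}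
    (h : ∑ i ∈ s, f i ≤ #s • c) : s.inf' hs f ≤ c := by
  obtain ⟨i, hi, hfi⟩ := exists_le_of_sum_le hs (f := f) (g := fun _ ↦ c) (by rwa [sum_const])
  exact (inf'_le f hi).trans hfi

theorem IsFeasibleChoresPartition.sum_sum_eq {n : ℕ} {P : Fin n → Finset ℕ}
    (hP : IsFeasibleChoresPartition n P) (v : ℕ → ℝ) :
    ∑ k, ∑ g ∈ P k, v g = ∑ g ∈ Icc 1 (2 * n), v g := by
  rw [← hP.2.1, sum_biUnion fun i _ j _ hij ↦ hP.1 i j hij]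

section TightInstance

variable {n k : ℕ}

theorem mem_tightChoresBundle {j : ℕ} :
    j ∈ tightChoresBundle n k ↔ j = k ∨ j = 2 * n + 1 - k := by
  simp [tightChoresBundle]

theorem card_tightChoresBundle (hk : k ∈ Icc 1 n) : #(tightChoresBundle n k) = 2 := by
  rw [mem_Icc] at hk
  exact card_pair (by omega)

theorem disjoint_tightChoresBundle {k' : ℕ} (hk : k ∈ Icc 1 n) (hk' : k' ∈ Icc 1 n)
    (hne : k ≠ k') :
    Disjoint (tightChoresBundle n k) (tightChoresBundle n k') := by
  rw [mem_Icc] at hk hk'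
  simp only [disjoint_left, mem_tightChoresBundle]
  omega

theorem biUnion_tightChoresBundle :
    (Icc 1 n).biUnion (tightChoresBundle n) = Icc 1 (2 * n) := by
  ext j
  simp only [mem_biUnion, mem_Icc, mem_tightChoresBundle]
  constructor
  · omega
  · rintro ⟨h1, h2⟩
    by_cases hj : j ≤ n
    · exact ⟨j, ⟨h1, hj⟩, Or.inl rfl⟩
    · exact ⟨2 * n + 1 - j, ⟨by omega, by omega⟩, Or.inr (by omega)⟩

theorem sum_tightChoresBundle (hk : k ∈ Icc 1 n) :
    ∑ j ∈ tightChoresBundle n k, tightChoresVal n j = -1 := by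
  rw [mem_Icc] at hk
  rw [tightChoresBundle, sum_pair (by omega)]
  obtain rfl | hlt := hk.2.eq_or_lt
  · rw [show 2 * k + 1 - k = k + 1 by omega]
    simp only [tightChoresVal, lt_irrefl, le_refl, if_false, if_true, add_lt_iff_neg_left]
    norm_num
  · simp only [tightChoresVal, if_pos hlt, if_neg (show ¬2 * n + 1 - k < n by omega),
      if_neg (show ¬2 * n + 1 - k ≤ n + 1 by omega)]
    ring

theorem sum_tightChoresVal : ∑ j ∈ Icc 1 (2 * n), tightChoresVal n j = -(n : ℝ) := by
  rw [← biUnion_tightChoresBundle,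
    sum_biUnion fun k hk k' hk' ↦ disjoint_tightChoresBundle hk hk',
    sum_congr rfl fun k hk ↦ sum_tightChoresBundle hk]
  simp

def tightChoresPartition (n : ℕ) (k : Fin n) : Finset ℕ :=
  tightChoresBundle n (k + 1)

theorem isFeasibleChoresPartition_tightChoresPartition :
    IsFeasibleChoresPartition n (tightChoresPartition n) := by
  refine ⟨fun i j hij ↦ ?_, ?_, fun k ↦ ?_⟩
  · exact disjoint_tightChoresBundle (by simp) (by simp) (by simpa [Fin.ext_iff] using hij)
  · rw [← biUnion_tightChoresBundle]
    ext j
    simp only [mem_biUnion, mem_univ, true_and, mem_Icc, tightChoresPartition]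
    constructor
    · rintro ⟨k, hj⟩
      exact ⟨k + 1, by omega, hj⟩
    · rintro ⟨m, hm, hj⟩
      exact ⟨⟨m - 1, by omega⟩, by rwa [Nat.sub_add_cancel hm.1]⟩
  · rw [tightChoresPartition, card_tightChoresBundle (by simp)]
    have := k.is_lt
    omega

theorem IsFeasibleChoresPartition.inf'_le_neg_one {P : Fin n → Finset ℕ}
    (hP : IsFeasibleChoresPartition n P) (hs : (univ : Finset (Fin n)).Nonempty) :
    univ.inf' hs (fun k ↦ ∑ g ∈ P k, tightChoresVal n g) ≤ -1 := by
  refine inf'_le_of_sum_le_card_nsmul hs ?_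
  rw [hP.sum_sum_eq, sum_tightChoresVal, card_univ, Fintype.card_fin, nsmul_eq_mul]
  simp

end TightInstance

/-- tight instance for single-category chores.  The bundles `P_1, …, P_n`
partition `{1, …, 2n}` into bundles of size `2`, each of value `−1`; the total value is
`−n`; and under quotas `q⁻ = 1`, `q⁺ = n+1` the maximin share over `n` agents equals `−1`. -/
theorem tight_chores_partition (n : ℕ) (hn : 1 ≤ n) :
    (∀ k ∈ Finset.Icc 1 n,
        (∑ j ∈ tightChoresBundle n k, tightChoresVal n j) = -1 ∧
        (tightChoresBundle n k).card = 2) ∧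
    (∀ k ∈ Finset.Icc 1 n, ∀ k' ∈ Finset.Icc 1 n, k ≠ k' →
        Disjoint (tightChoresBundle n k) (tightChoresBundle n k')) ∧
    (Finset.Icc 1 n).biUnion (tightChoresBundle n) = Finset.Icc 1 (2 * n) ∧
    (∑ j ∈ Finset.Icc 1 (2 * n), tightChoresVal n j) = -(n : ℝ) ∧
    IsGreatest {x : ℝ | ∃ P : Fin n → Finset ℕ, IsFeasibleChoresPartition n P ∧
        x = Finset.univ.inf' (Finset.univ_nonempty_iff.mpr ⟨⟨0, hn⟩⟩)
          (fun k => ∑ g ∈ P k, tightChoresVal n g)} (-1) := by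
  refine ⟨fun k hk ↦ ⟨sum_tightChoresBundle hk, card_tightChoresBundle hk⟩,
    fun k hk k' hk' ↦ disjoint_tightChoresBundle hk hk', biUnion_tightChoresBundle,
    sum_tightChoresVal,
    ⟨tightChoresPartition n, isFeasibleChoresPartition_tightChoresPartition, ?_⟩, ?_⟩
  · have hval (k : Fin n) : ∑ g ∈ tightChoresPartition n k, tightChoresVal n g = -1 :=
      sum_tightChoresBundle (by simp)
    simp only [hval, inf'_const]
  · rintro x ⟨P, hP, rfl⟩
    exact hP.inf'_le_neg_one _
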